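/- arXiv:1503.05033 — 3 statements merged into one kernel-verified Lean document; each statement's English description precedes it below -/
import Mathlib

section
/- Let T = max{x+y : (x,y) ∈ I} for a compact set I ⊂ [0,1]² and suppose J < 1/T. Define f₁(u) = f₂(u) = c₁·e^u and f₃(u) = e^u, and g₁(u) = g₂(u) = c₂·e^{(J+1)u} and g₃(u) = c₁²/c₂², where c₁ = (e - 1)^{-1} and c₂ = (J+1)/(e^{J+1} - 1) are chosen so that ∫₀¹ f₁ = ∫₀¹ g₁ = 1. Then f₁(x)·f₂(y)·f₃(m_J(x+y)) = g₁(x)·g₂(y)·g₃(m_J(x+y)) for all (x,y) ∈ I, while (f₁, f₂, f₃) ≠ (g₁, g₂, g₃). -/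
/-- The periodic wrapping function `m_J(t) = J·(t mod 1/J)`. -/
noncomputable def mJ (J t : ℝ) : ℝ := Int.fract (J * t)

theorem non_identifiability_small_J (I : Set (ℝ × ℝ))
    (hI : I ⊆ Set.Icc (0 : ℝ) 1 ×ˢ Set.Icc (0 : ℝ) 1) (hIc : IsCompact I)
    (T J : ℝ) (hT : IsGreatest ((fun p : ℝ × ℝ => p.1 + p.2) '' I) T)
    (hT0 : 0 < T) (hJ0 : 0 < J) (hJ : J < 1 / T)
    (c₁ c₂ : ℝ) (hc₁ : c₁ = (Real.exp 1 - 1)⁻¹)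
    (hc₂ : c₂ = (J + 1) / (Real.exp (J + 1) - 1))
    (f₁ f₂ f₃ g₁ g₂ g₃ : ℝ → ℝ)
    (hf₁ : f₁ = fun u => c₁ * Real.exp u) (hf₂ : f₂ = fun u => c₁ * Real.exp u)
    (hf₃ : f₃ = fun u => Real.exp u)
    (hg₁ : g₁ = fun u => c₂ * Real.exp ((J + 1) * u))
    (hg₂ : g₂ = fun u => c₂ * Real.exp ((J + 1) * u))
    (hg₃ : g₃ = fun _ => c₁ ^ 2 / c₂ ^ 2) :
    (∀ p ∈ I, f₁ p.1 * f₂ p.2 * f₃ (mJ J (p.1 + p.2)) =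
        g₁ p.1 * g₂ p.2 * g₃ (mJ J (p.1 + p.2))) ∧
    ¬ (f₁ = g₁ ∧ f₂ = g₂ ∧ f₃ = g₃) := by
  have hc₂ne : c₂ ≠ 0 := by
    rw [hc₂]
    apply div_ne_zero (by linarith)
    have := Real.add_one_le_exp (J + 1)
    linarith
  constructor
  · rintro ⟨x, y⟩ hp
    obtain ⟨hx, hy⟩ := hI hp
    have hsum0 : 0 ≤ x + y := by simp only at hx hy; exact add_nonneg hx.1 hy.1
    have hsumT : x + y ≤ T := hT.2 ⟨(x, y), hp, rfl⟩
    have h1 : J * (x + y) < 1 := by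
      calc J * (x + y) ≤ J * T := by nlinarith
        _ < (1 / T) * T := by nlinarith
        _ = 1 := by field_simp
    have hfr : mJ J (x + y) = J * (x + y) := by
      simp only [mJ]
      exact Int.fract_eq_self.mpr ⟨by positivity, h1⟩
    rw [hfr, hf₁, hf₂, hf₃, hg₁, hg₂, hg₃]
    simp only
    have key : Real.exp ((J + 1) * x) * Real.exp ((J + 1) * y) =
        Real.exp x * Real.exp y * Real.exp (J * (x + y)) := by
      rw [← Real.exp_add, ← Real.exp_add, ← Real.exp_add]
      ring_nf
    have h2 : c₂ * Real.exp ((J + 1) * x) * (c₂ * Real.exp ((J + 1) * y)) * (c₁ ^ 2 / c₂ ^ 2)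
        = c₁ ^ 2 * (Real.exp ((J + 1) * x) * Real.exp ((J + 1) * y)) := by
      field_simp
    rw [h2, key]
    ring
  · rintro ⟨-, -, h3⟩
    have h0 := congrFun h3 0
    have h1 := congrFun h3 1
    rw [hf₃, hg₃] at h0 h1
    simp only at h0 h1
    rw [← h0] at h1
    have : (0 : ℝ) = 1 := Real.exp_injective h1.symm
    norm_num at this
end

section
/- Suppose f₁, f₂, f₃ and g₁, g₂, g₃ are positive functions, bounded away from zero and infinity, with f₁, g₁, f₂, g₂ differentiable on [0,1], f₃, g₃ twice differentiable on [0,1), normalized by ∫₀¹ f₁ = ∫₀¹ g₁ = ∫₀¹ f₂ = ∫₀¹ g₂ = 1, and assume f₁(x)f₂(y)f₃(m_J(x+y)) = g₁(x)g₂(y)g₃(m_J(x+y)) for all (x,y) ∈ I, where I ⊂ [0,1]² satisfies: (A1) its projections onto both axes equal [0,1]; (A2) for every z ∈ [0,1) there is (x,y) in the interior of I with m_J(x+y) = z, and for every x,y ∈ (0,1) there exist x', y' with (x,y') and (x',y) in the interior of I; (A5) there exist 0 = x₀ < x₁ < ⋯ < x_k = 1 and 1 = y₀ > y₁ > ⋯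 > y_k = 0 with (x, y_j) ∈ I for x_j ≤ x ≤ x_{j+1}. Then f₁ = g₁, f₂ = g₂ and f₃ = g₃. -/
open Set Filter Topology

theorem hasDerivAt_fract {t : ℝ} (ht : Int.fract t ≠ 0) : HasDerivAt Int.fract 1 t := by
  have hlt : (⌊t⌋ : ℝ) < t := by
    rw [← sub_pos, Int.self_sub_floor]
    exact (Int.fract_nonneg t).lt_of_ne' ht
  have hfract : Int.fract =ᶠ[𝓝 t] fun u => u - ⌊t⌋ := by
    filter_upwards [Ioo_mem_nhds hlt (Int.lt_floor_add_one t)] with u hu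
    rw [Int.fract, Int.floor_eq_iff.2 ⟨hu.1.le, hu.2⟩]
  exact ((hasDerivAt_id t).sub_const _).congr_of_eventuallyEq hfract

theorem eq_zero_of_continuousAt_mul_fract {s : ℝ} {n : ℤ}
    (h : ContinuousAt (fun t => s * Int.fract t) n) : s = 0 := by
  have hleft : Tendsto (fun t => s * Int.fract t) (𝓝[<] (n : ℝ)) (𝓝 (s * 1)) :=
    (tendsto_fract_left' n).const_mul s
  have hval := h.tendsto.mono_left (nhdsWithin_le_nhds (s := Iio (n : ℝ)))
  simpa using tendsto_nhds_unique hleft hval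

theorem eq_zero_of_continuousAt_mul_fract_affine {s J b x₀ : ℝ} (hJ : J ≠ 0)
    (hx₀ : Int.fract (J * (x₀ + b)) = 0)
    (h : ContinuousAt (fun x => s * Int.fract (J * (x + b))) x₀) : s = 0 := by
  have hn : (⌊J * (x₀ + b)⌋ : ℝ) = J * (x₀ + b) := by
    linarith [Int.floor_add_fract (J * (x₀ + b))]
  refine eq_zero_of_continuousAt_mul_fract (n := ⌊J * (x₀ + b)⌋) ?_
  have hlin : ContinuousAt (fun t : ℝ => t / J - b) (⌊J * (x₀ + b)⌋ : ℝ) := by fun_prop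
  convert h.comp_of_eq hlin (by rw [hn]; field_simp; ring) using 2 with t
  simp only [Function.comp_apply]
  field_simp
  ring_nf

theorem eventually_mk_mem_of_mem_interior_left {X Y : Type*} [TopologicalSpace X]
    [TopologicalSpace Y] {I : Set (X × Y)} {p : X × Y} (hp : p ∈ interior I) :
    ∀ᶠ x in 𝓝 p.1, (x, p.2) ∈ I :=
  (continuous_id.prodMk continuous_const).continuousAt.preimage_mem_nhds
    (mem_interior_iff_mem_nhds.1 hp)

theorem eventually_mk_mem_of_mem_interior_right {X Y : Type*} [TopologicalSpace X]
    [TopologicalSpace Y] {I : Set (X × Y)} {p : X × Y} (hp : p ∈ interior I) :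
    ∀ᶠ y in 𝓝 p.2, (p.1, y) ∈ I :=
  (continuous_const.prodMk continuous_id).continuousAt.preimage_mem_nhds
    (mem_interior_iff_mem_nhds.1 hp)

theorem eq_add_mul_sub_of_hasDerivAt {f : ℝ → ℝ} {a b s : ℝ} (hab : a ≤ b)
    (hc : ContinuousOn f (Icc a b)) (hd : ∀ x ∈ Ioo a b, HasDerivAt f s x) :
    f b = f a + s * (b - a) := by
  rcases hab.eq_or_lt with rfl | hab
  · ring
  obtain ⟨c, -, hslope⟩ := exists_hasDerivAt_eq_slope f (fun _ => s) hab hc hd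
  rw [eq_div_iff (sub_ne_zero.2 hab.ne')] at hslope
  linarith

theorem eq_apply_left_of_eventually_eq {f : ℝ → ℝ} {a b : ℝ}
    (hc : ContinuousOn f (Icc a b)) (hloc : ∀ x ∈ Ioo a b, ∀ᶠ y in 𝓝 x, f y = f x) :
    ∀ x ∈ Icc a b, f x = f a := fun x hx => by
  simpa using eq_add_mul_sub_of_hasDerivAt (s := 0) hx.1 (hc.mono (Icc_subset_Icc_right hx.2))
    fun w hw => (hasDerivAt_const w (f w)).congr_of_eventuallyEq
      (hloc w ⟨hw.1, hw.2.trans_le hx.2⟩)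

theorem IsPreconnected.apply_eq_of_eventually_eq {X Y : Type*} [TopologicalSpace X]
    {f : X → Y} {s : Set X} (hs : IsPreconnected s)
    (hf : ∀ x ∈ s, ∀ᶠ y in 𝓝 x, f y = f x) {x y : X} (hx : x ∈ s) (hy : y ∈ s) :
    f x = f y := by
  have := isPreconnected_iff_preconnectedSpace.1 hs
  have hloc : IsLocallyConstant fun x : s => f x := (IsLocallyConstant.iff_eventually_eq _).2
    fun x => continuous_subtype_val.continuousAt.eventually (hf x x.2)
  exact hloc.apply_eq_of_preconnectedSpace ⟨x, hx⟩ ⟨y, hy⟩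

noncomputable def logRatio (f g : ℝ → ℝ) (u : ℝ) : ℝ := Real.log (f u) - Real.log (g u)

theorem logRatio_add_add_eq_zero {f₁ f₂ f₃ g₁ g₂ g₃ : ℝ → ℝ} {x y z : ℝ}
    (hf₁ : 0 < f₁ x) (hf₂ : 0 < f₂ y) (hf₃ : 0 < f₃ z)
    (hg₁ : 0 < g₁ x) (hg₂ : 0 < g₂ y) (hg₃ : 0 < g₃ z)
    (h : f₁ x * f₂ y * f₃ z = g₁ x * g₂ y * g₃ z) :
    logRatio f₁ g₁ x + logRatio f₂ g₂ y + logRatio f₃ g₃ z = 0 := by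
  have := congrArg Real.log h
  rw [Real.log_mul (by positivity) hf₃.ne', Real.log_mul hf₁.ne' hf₂.ne',
    Real.log_mul (by positivity) hg₃.ne', Real.log_mul hg₁.ne' hg₂.ne'] at this
  simp only [logRatio]
  linarith

theorem DifferentiableOn.logRatio {f g : ℝ → ℝ} {s : Set ℝ} (hf : DifferentiableOn ℝ f s)
    (hg : DifferentiableOn ℝ g s) (hf₀ : ∀ u ∈ s, 0 < f u) (hg₀ : ∀ u ∈ s, 0 < g u) :
    DifferentiableOn ℝ (logRatio f g) s :=
  (hf.log fun u hu => (hf₀ u hu).ne').sub (hg.log fun u hu => (hg₀ u hu).ne')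

theorem eqOn_of_logRatio_eq_const {f g : ℝ → ℝ} {a b c : ℝ} (hab : a ≤ b)
    (hf : ∀ u ∈ Icc a b, 0 < f u) (hg : ∀ u ∈ Icc a b, 0 < g u)
    (hc : ∀ u ∈ Icc a b, logRatio f g u = c)
    (hint : ∫ u in a..b, f u = ∫ u in a..b, g u) (hg0 : ∫ u in a..b, g u ≠ 0) :
    EqOn f g (Icc a b) := by
  have hfg : ∀ u ∈ Icc a b, f u = Real.exp c * g u := fun u hu => by
    rw [← hc u hu, logRatio, Real.exp_sub, Real.exp_log (hf u hu), Real.exp_log (hg u hu),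
      div_mul_cancel₀ _ (hg u hu).ne']
  have hexp : Real.exp c = 1 := by
    rw [intervalIntegral.integral_congr (g := fun u => Real.exp c * g u)
      (by rwa [uIcc_of_le hab]), intervalIntegral.integral_const_mul] at hint
    exact (mul_eq_right₀ hg0).1 hint
  intro u hu
  rw [hfg u hu, hexp, one_mul]

section SumEqZero

variable {J : ℝ} {I : Set (ℝ × ℝ)} {h₁ h₂ h₃ : ℝ → ℝ}

theorem hasDerivAt_fst_of_sum_eq_zero
    (hsum : ∀ p ∈ I, h₁ p.1 + h₂ p.2 + h₃ (Int.fract (J * (p.1 + p.2))) = 0)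
    {p : ℝ × ℝ} (hp : p ∈ interior I) (hz : Int.fract (J * (p.1 + p.2)) ≠ 0)
    (hd : DifferentiableAt ℝ h₃ (Int.fract (J * (p.1 + p.2)))) :
    HasDerivAt h₁ (-(J * deriv h₃ (Int.fract (J * (p.1 + p.2))))) p.1 := by
  have hlin : HasDerivAt (fun x => J * (x + p.2)) J p.1 := by
    simpa using ((hasDerivAt_id p.1).add_const p.2).const_mul J
  have hcomp : HasDerivAt (fun x => -h₂ p.2 - h₃ (Int.fract (J * (x + p.2))))
      (-(J * deriv h₃ (Int.fract (J * (p.1 + p.2))))) p.1 := by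
    simpa [mul_comm] using
      ((hd.hasDerivAt.comp _ (hasDerivAt_fract hz)).comp p.1 hlin).const_sub (-h₂ p.2)
  refine hcomp.congr_of_eventuallyEq ?_
  filter_upwards [eventually_mk_mem_of_mem_interior_left hp] with x hx
  linarith [hsum _ hx]

theorem eventually_deriv_eq_of_sum_eq_zero (hJ : J ≠ 0)
    (hsum : ∀ p ∈ I, h₁ p.1 + h₂ p.2 + h₃ (Int.fract (J * (p.1 + p.2))) = 0)
    (hd : DifferentiableOn ℝ h₃ (Ioo 0 1)) {z₀ : ℝ} (hz₀ : z₀ ∈ Ioo 0 1)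
    {p : ℝ × ℝ} (hp : p ∈ interior I) (hpz : Int.fract (J * (p.1 + p.2)) = z₀) :
    ∀ᶠ z in 𝓝 z₀, deriv h₃ z = deriv h₃ z₀ := by
  have hderiv : ∀ {q : ℝ × ℝ}, q ∈ interior I → ∀ z ∈ Ioo (0 : ℝ) 1,
      Int.fract (J * (q.1 + q.2)) = z → HasDerivAt h₁ (-(J * deriv h₃ z)) q.1 := by
    rintro q hq z hz rfl
    exact hasDerivAt_fst_of_sum_eq_zero hsum hq hz.1.ne'
      (hd.differentiableAt (isOpen_Ioo.mem_nhds hz))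
  -- moving along the vertical line through `p` shifts the wrapped sum by exactly `z - z₀`
  set q : ℝ → ℝ × ℝ := fun z => (p.1, p.2 + (z - z₀) / J)
  have hqz : ∀ z ∈ Ico (0 : ℝ) 1, Int.fract (J * ((q z).1 + (q z).2)) = z := fun z hz => by
    have : J * ((q z).1 + (q z).2) = ⌊J * (p.1 + p.2)⌋ + z := by
      have := Int.floor_add_fract (J * (p.1 + p.2))
      simp only [q]
      field_simp
      linarith
    rw [this, Int.fract_intCast_add, Int.fract_eq_self.2 hz]
  have hqI : ∀ᶠ z in 𝓝 z₀, q z ∈ interior I :=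
    (by fun_prop : Continuous q).continuousAt.preimage_mem_nhds
      (by simpa [q] using isOpen_interior.mem_nhds hp)
  filter_upwards [hqI, isOpen_Ioo.mem_nhds hz₀] with z hzI hz
  simpa [hJ] using (hderiv hzI z hz (hqz z (Ioo_subset_Ico_self hz))).unique
    (hderiv hp z₀ hz₀ hpz)

theorem eq_apply_zero_of_sum_eq_zero (hJ : J ≠ 0) (hI : I ⊆ Icc 0 1 ×ˢ Icc 0 1)
    (hsum : ∀ p ∈ I, h₁ p.1 + h₂ p.2 + h₃ (Int.fract (J * (p.1 + p.2))) = 0)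
    (hc₁ : ContinuousOn h₁ (Icc 0 1)) (hd₃ : DifferentiableOn ℝ h₃ (Ico 0 1))
    (hsurj : ∀ z ∈ Ico (0 : ℝ) 1, ∃ p ∈ interior I, Int.fract (J * (p.1 + p.2)) = z) :
    ∀ z ∈ Ico (0 : ℝ) 1, h₃ z = h₃ 0 := by
  set s := deriv h₃ (1 / 2)
  have hs : ∀ z ∈ Ioo (0 : ℝ) 1, deriv h₃ z = s := fun z hz =>
    isPreconnected_Ioo.apply_eq_of_eventually_eq (fun w hw => by
      obtain ⟨p, hp, hpz⟩ := hsurj w (Ioo_subset_Ico_self hw)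
      exact eventually_deriv_eq_of_sum_eq_zero hJ hsum (hd₃.mono Ioo_subset_Ico_self) hw hp hpz)
      hz (by norm_num)
  have haff : ∀ z ∈ Ico (0 : ℝ) 1, h₃ z = h₃ 0 + s * z := fun z hz => by
    refine (eq_add_mul_sub_of_hasDerivAt (s := s) hz.1 (hd₃.continuousOn.mono
      (Icc_subset_Ico_right hz.2)) fun w hw => ?_).trans (by ring)
    have hw' : w ∈ Ioo (0 : ℝ) 1 := ⟨hw.1, hw.2.trans hz.2⟩
    rw [← hs w hw']
    exact (hd₃.differentiableAt (Ico_mem_nhds hw'.1 hw'.2)).hasDerivAt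
  -- where the sum wraps around, `h₃ ∘ fract` jumps by `s` while `h₁` is continuous
  obtain ⟨q, hq, hq0⟩ := hsurj 0 (left_mem_Ico.2 one_pos)
  have hq₁ : q.1 ∈ Ioo (0 : ℝ) 1 := by
    have := interior_mono hI hq
    rw [interior_prod_eq, interior_Icc] at this
    exact this.1
  have hjump : ContinuousAt (fun x => s * Int.fract (J * (x + q.2))) q.1 := by
    have hc : ContinuousAt (fun x => -(h₁ x + h₂ q.2 + h₃ 0)) q.1 := by
      have := hc₁.continuousAt (Icc_mem_nhds hq₁.1 hq₁.2)
      fun_prop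
    refine hc.congr ?_
    filter_upwards [eventually_mk_mem_of_mem_interior_left hq] with x hx
    have := hsum _ hx
    rw [haff _ ⟨Int.fract_nonneg _, Int.fract_lt_one _⟩] at this
    linarith
  have hs0 : s = 0 := eq_zero_of_continuousAt_mul_fract_affine hJ hq0 hjump
  intro z hz
  rw [haff z hz, hs0, zero_mul, add_zero]

theorem eq_apply_fst_snd_of_sum_eq_zero (hJ : J ≠ 0) (hI : I ⊆ Icc 0 1 ×ˢ Icc 0 1)
    (hsum : ∀ p ∈ I, h₁ p.1 + h₂ p.2 + h₃ (Int.fract (J * (p.1 + p.2))) = 0)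
    (hc₁ : ContinuousOn h₁ (Icc 0 1)) (hc₂ : ContinuousOn h₂ (Icc 0 1))
    (hd₃ : DifferentiableOn ℝ h₃ (Ico 0 1))
    (hsurj : ∀ z ∈ Ico (0 : ℝ) 1, ∃ p ∈ interior I, Int.fract (J * (p.1 + p.2)) = z)
    (hlines : ∀ x ∈ Ioo (0 : ℝ) 1, ∀ y ∈ Ioo (0 : ℝ) 1,
      ∃ x' y' : ℝ, (x, y') ∈ interior I ∧ (x', y) ∈ interior I) :
    (∀ x ∈ Icc (0 : ℝ) 1, h₁ x = h₁ 0) ∧ ∀ y ∈ Icc (0 : ℝ) 1, h₂ y = h₂ 0 := by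
  have h₃c := eq_apply_zero_of_sum_eq_zero hJ hI hsum hc₁ hd₃ hsurj
  have hadd : ∀ p ∈ I, h₁ p.1 + h₂ p.2 = -h₃ 0 := fun p hp => by
    have := hsum p hp
    rw [h₃c _ ⟨Int.fract_nonneg _, Int.fract_lt_one _⟩] at this
    linarith
  refine ⟨eq_apply_left_of_eventually_eq hc₁ fun x hx => ?_,
    eq_apply_left_of_eventually_eq hc₂ fun y hy => ?_⟩
  · obtain ⟨-, y, hxy, -⟩ := hlines x hx (1 / 2) (by norm_num)
    filter_upwards [eventually_mk_mem_of_mem_interior_left hxy] with x' hx'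
    linarith [hadd _ hx', hadd _ (interior_subset hxy)]
  · obtain ⟨x, -, -, hxy⟩ := hlines (1 / 2) (by norm_num) y hy
    filter_upwards [eventually_mk_mem_of_mem_interior_right hxy] with y' hy'
    linarith [hadd _ hy', hadd _ (interior_subset hxy)]

end SumEqZero

theorem identifiability_smooth_general (J : ℝ) (hJ : 0 < J)
    (I : Set (ℝ × ℝ)) (hI : I ⊆ Set.Icc (0 : ℝ) 1 ×ˢ Set.Icc (0 : ℝ) 1)
    (f₁ f₂ f₃ g₁ g₂ g₃ : ℝ → ℝ)
    -- bounded away from zero and infinity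
    (hbound : ∃ m M : ℝ, 0 < m ∧
      (∀ u ∈ Set.Icc (0 : ℝ) 1, m ≤ f₁ u ∧ f₁ u ≤ M ∧ m ≤ f₂ u ∧ f₂ u ≤ M ∧
        m ≤ g₁ u ∧ g₁ u ≤ M ∧ m ≤ g₂ u ∧ g₂ u ≤ M) ∧
      (∀ u ∈ Set.Ico (0 : ℝ) 1, m ≤ f₃ u ∧ f₃ u ≤ M ∧ m ≤ g₃ u ∧ g₃ u ≤ M))
    -- smoothness
    (hf₁d : DifferentiableOn ℝ f₁ (Set.Icc 0 1))
    (hf₂d : DifferentiableOn ℝ f₂ (Set.Icc 0 1))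
    (hg₁d : DifferentiableOn ℝ g₁ (Set.Icc 0 1))
    (hg₂d : DifferentiableOn ℝ g₂ (Set.Icc 0 1))
    (hf₃d : DifferentiableOn ℝ f₃ (Set.Ico 0 1))
    (hg₃d : DifferentiableOn ℝ g₃ (Set.Ico 0 1))
    -- normalization
    (hf₁n : ∫ u in (0 : ℝ)..1, f₁ u = 1) (hf₂n : ∫ u in (0 : ℝ)..1, f₂ u = 1)
    (hg₁n : ∫ u in (0 : ℝ)..1, g₁ u = 1) (hg₂n : ∫ u in (0 : ℝ)..1, g₂ u = 1)
    -- the two representations agree on I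
    (heq : ∀ p ∈ I, f₁ p.1 * f₂ p.2 * f₃ (mJ J (p.1 + p.2)) =
      g₁ p.1 * g₂ p.2 * g₃ (mJ J (p.1 + p.2)))
    -- (A2)
    (hA2a : ∀ z ∈ Set.Ico (0 : ℝ) 1, ∃ p ∈ interior I, mJ J (p.1 + p.2) = z)
    (hA2b : ∀ x ∈ Set.Ioo (0 : ℝ) 1, ∀ y ∈ Set.Ioo (0 : ℝ) 1,
      ∃ x' y' : ℝ, (x, y') ∈ interior I ∧ (x', y) ∈ interior I) :
    Set.EqOn f₁ g₁ (Set.Icc 0 1) ∧ Set.EqOn f₂ g₂ (Set.Icc 0 1) ∧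
      Set.EqOn f₃ g₃ (Set.Ico 0 1) := by
  obtain ⟨m, M, hm, hb, hb₃⟩ := hbound
  have hf₁ : ∀ u ∈ Icc (0 : ℝ) 1, 0 < f₁ u := fun u hu => hm.trans_le (hb u hu).1
  have hf₂ : ∀ u ∈ Icc (0 : ℝ) 1, 0 < f₂ u := fun u hu => hm.trans_le (hb u hu).2.2.1
  have hg₁ : ∀ u ∈ Icc (0 : ℝ) 1, 0 < g₁ u := fun u hu => hm.trans_le (hb u hu).2.2.2.2.1
  have hg₂ : ∀ u ∈ Icc (0 : ℝ) 1, 0 < g₂ u := fun u hu => hm.trans_le (hb u hu).2.2.2.2.2.2.1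
  have hf₃ : ∀ u ∈ Ico (0 : ℝ) 1, 0 < f₃ u := fun u hu => hm.trans_le (hb₃ u hu).1
  have hg₃ : ∀ u ∈ Ico (0 : ℝ) 1, 0 < g₃ u := fun u hu => hm.trans_le (hb₃ u hu).2.2.1
  have hsum : ∀ p ∈ I, logRatio f₁ g₁ p.1 + logRatio f₂ g₂ p.2 +
      logRatio f₃ g₃ (Int.fract (J * (p.1 + p.2))) = 0 := fun p hp =>
    have hz : Int.fract (J * (p.1 + p.2)) ∈ Ico (0 : ℝ) 1 :=
      ⟨Int.fract_nonneg _, Int.fract_lt_one _⟩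
    logRatio_add_add_eq_zero (hf₁ _ (hI hp).1) (hf₂ _ (hI hp).2) (hf₃ _ hz) (hg₁ _ (hI hp).1)
      (hg₂ _ (hI hp).2) (hg₃ _ hz) (heq p hp)
  obtain ⟨hc₁, hc₂⟩ := eq_apply_fst_snd_of_sum_eq_zero hJ.ne' hI hsum
    (hf₁d.logRatio hg₁d hf₁ hg₁).continuousOn (hf₂d.logRatio hg₂d hf₂ hg₂).continuousOn
    (hf₃d.logRatio hg₃d hf₃ hg₃) hA2a hA2b
  have e₁ := eqOn_of_logRatio_eq_const zero_le_one hf₁ hg₁ hc₁ (by rw [hf₁n, hg₁n])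
    (by rw [hg₁n]; exact one_ne_zero)
  have e₂ := eqOn_of_logRatio_eq_const zero_le_one hf₂ hg₂ hc₂ (by rw [hf₂n, hg₂n])
    (by rw [hg₂n]; exact one_ne_zero)
  refine ⟨e₁, e₂, fun z hz => ?_⟩
  obtain ⟨p, hp, rfl⟩ := hA2a z hz
  have hp' := hI (interior_subset hp)
  have h := heq p (interior_subset hp)
  rw [e₁ hp'.1, e₂ hp'.2] at h
  exact mul_left_cancel₀ (mul_pos (hg₁ _ hp'.1) (hg₂ _ hp'.2)).ne' h

theorem identifiability_smooth (J : ℝ) (hJ : 0 < J)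
    (I : Set (ℝ × ℝ)) (hI : I ⊆ Set.Icc (0 : ℝ) 1 ×ˢ Set.Icc (0 : ℝ) 1)
    (f₁ f₂ f₃ g₁ g₂ g₃ : ℝ → ℝ)
    -- bounded away from zero and infinity
    (hbound : ∃ m M : ℝ, 0 < m ∧
      (∀ u ∈ Set.Icc (0 : ℝ) 1, m ≤ f₁ u ∧ f₁ u ≤ M ∧ m ≤ f₂ u ∧ f₂ u ≤ M ∧
        m ≤ g₁ u ∧ g₁ u ≤ M ∧ m ≤ g₂ u ∧ g₂ u ≤ M) ∧
      (∀ u ∈ Set.Ico (0 : ℝ) 1, m ≤ f₃ u ∧ f₃ u ≤ M ∧ m ≤ g₃ u ∧ g₃ u ≤ M))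
    -- smoothness
    (hf₁d : DifferentiableOn ℝ f₁ (Set.Icc 0 1))
    (hf₂d : DifferentiableOn ℝ f₂ (Set.Icc 0 1))
    (hg₁d : DifferentiableOn ℝ g₁ (Set.Icc 0 1))
    (hg₂d : DifferentiableOn ℝ g₂ (Set.Icc 0 1))
    (hf₃d : DifferentiableOn ℝ f₃ (Set.Ico 0 1))
    (hf₃d2 : DifferentiableOn ℝ (derivWithin f₃ (Set.Ico 0 1)) (Set.Ico 0 1))
    (hg₃d : DifferentiableOn ℝ g₃ (Set.Ico 0 1))
    (hg₃d2 : DifferentiableOn ℝ (derivWithin g₃ (Set.Ico 0 1)) (Set.Ico 0 1))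
    -- normalization
    (hf₁n : ∫ u in (0 : ℝ)..1, f₁ u = 1) (hf₂n : ∫ u in (0 : ℝ)..1, f₂ u = 1)
    (hg₁n : ∫ u in (0 : ℝ)..1, g₁ u = 1) (hg₂n : ∫ u in (0 : ℝ)..1, g₂ u = 1)
    -- the two representations agree on I
    (heq : ∀ p ∈ I, f₁ p.1 * f₂ p.2 * f₃ (mJ J (p.1 + p.2)) =
      g₁ p.1 * g₂ p.2 * g₃ (mJ J (p.1 + p.2)))
    -- (A1) projections
    (hA1x : Prod.fst '' I = Set.Icc 0 1) (hA1y : Prod.snd '' I = Set.Icc 0 1)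
    -- (A2)
    (hA2a : ∀ z ∈ Set.Ico (0 : ℝ) 1, ∃ p ∈ interior I, mJ J (p.1 + p.2) = z)
    (hA2b : ∀ x ∈ Set.Ioo (0 : ℝ) 1, ∀ y ∈ Set.Ioo (0 : ℝ) 1,
      ∃ x' y' : ℝ, (x, y') ∈ interior I ∧ (x', y) ∈ interior I)
    -- (A5)
    (hA5 : ∃ (k : ℕ) (x y : ℕ → ℝ), 0 < k ∧ x 0 = 0 ∧ x k = 1 ∧ y 0 = 1 ∧ y k = 0 ∧
      (∀ i < k, x i < x (i + 1)) ∧ (∀ i < k, y (i + 1) < y i) ∧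
      (∀ j < k, ∀ u ∈ Set.Icc (x j) (x (j + 1)), (u, y j) ∈ I)) :
    Set.EqOn f₁ g₁ (Set.Icc 0 1) ∧ Set.EqOn f₂ g₂ (Set.Icc 0 1) ∧
      Set.EqOn f₃ g₃ (Set.Ico 0 1) :=
  identifiability_smooth_general J hJ I hI f₁ f₂ f₃ g₁ g₂ g₃ hbound hf₁d hf₂d hg₁d hg₂d hf₃d hg₃d
    hf₁n hf₂n hg₁n hg₂n heq hA2a hA2b
end

section
/- Suppose μ₁ : (0,1) → ℝ is continuous, μ₂ : (0,1) → ℝ is continuous, μ₃ : [0,1) → ℝ is continuous, these satisfy μ₁(x) + μ₂(y) + μ₃(m_J(x+y)) = 0 for all (x,y) in the interior of I with (A2) holding, and fix z₀ ∈ (0,1) with (x₀,y₀) in the interior of I and m_J(x₀+y₀) = z₀. Then there exists ε > 0 such that the function γ(u) = μ₃(z₀ + J·u) - μ₃(z₀) satisfies γ(u+v) = γ(u) + γ(v) for all u, v with |u|, |v|, |u+v| < ε. -/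
theorem local_cauchy_equation_for_mu3 (J : ℝ) (hJ : 0 < J)
    (I : Set (ℝ × ℝ)) (μ₁ μ₂ μ₃ : ℝ → ℝ)
    (hμ₁ : ContinuousOn μ₁ (Set.Ioo 0 1)) (hμ₂ : ContinuousOn μ₂ (Set.Ioo 0 1))
    (hμ₃ : ContinuousOn μ₃ (Set.Ico 0 1))
    (heq : ∀ p ∈ interior I, μ₁ p.1 + μ₂ p.2 + μ₃ (mJ J (p.1 + p.2)) = 0)
    -- (A2)
    (hA2a : ∀ z ∈ Set.Ico (0 : ℝ) 1, ∃ p ∈ interior I, mJ J (p.1 + p.2) = z)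
    (hA2b : ∀ x ∈ Set.Ioo (0 : ℝ) 1, ∀ y ∈ Set.Ioo (0 : ℝ) 1,
      ∃ x' y' : ℝ, (x, y') ∈ interior I ∧ (x', y) ∈ interior I)
    (z₀ : ℝ) (hz₀ : z₀ ∈ Set.Ioo (0 : ℝ) 1) (x₀ y₀ : ℝ)
    (hxy₀ : (x₀, y₀) ∈ interior I) (hmz₀ : mJ J (x₀ + y₀) = z₀) :
    ∃ ε > 0, ∀ u v : ℝ, |u| < ε → |v| < ε → |u + v| < ε →
      (μ₃ (z₀ + J * (u + v)) - μ₃ z₀) =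
        (μ₃ (z₀ + J * u) - μ₃ z₀) + (μ₃ (z₀ + J * v) - μ₃ z₀) := by
  obtain ⟨hz0, hz1⟩ := hz₀
  obtain ⟨δ, hδ, hball⟩ := Metric.isOpen_iff.mp isOpen_interior _ hxy₀
  refine ⟨min δ (min z₀ (1 - z₀) / J), ?_, ?_⟩
  · exact lt_min hδ (div_pos (lt_min hz0 (by linarith)) hJ)
  intro u v hu hv huv
  set ε := min δ (min z₀ (1 - z₀) / J) with hε
  have hεδ : ε ≤ δ := min_le_left _ _
  have hεJ : J * ε ≤ min z₀ (1 - z₀) := by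
    have := min_le_right δ (min z₀ (1 - z₀) / J)
    calc J * ε ≤ J * (min z₀ (1 - z₀) / J) := by
          exact mul_le_mul_of_nonneg_left this hJ.le
      _ = min z₀ (1 - z₀) := by field_simp
  have hico : ∀ w : ℝ, |w| < ε → z₀ + J * w ∈ Set.Ico (0:ℝ) 1 := by
    intro w hw
    have h1 : |J * w| < min z₀ (1 - z₀) := by
      rw [abs_mul, abs_of_pos hJ]
      calc J * |w| < J * ε := by exact mul_lt_mul_of_pos_left hw hJ
        _ ≤ _ := hεJ
    rw [abs_lt] at h1
    constructor
    · nlinarith [h1.1, min_le_left z₀ (1 - z₀)]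
    · nlinarith [h1.2, min_le_right z₀ (1 - z₀)]
  have key : ∀ w : ℝ, z₀ + J * w ∈ Set.Ico (0:ℝ) 1 → mJ J (x₀ + y₀ + w) = z₀ + J * w := by
    intro w hw
    unfold mJ at hmz₀ ⊢
    have hfl : J * (x₀ + y₀) = (⌊J * (x₀ + y₀)⌋ : ℝ) + z₀ := by
      have := Int.fract_add_floor (J * (x₀ + y₀))
      rw [hmz₀] at this
      linarith
    have : J * (x₀ + y₀ + w) = (⌊J * (x₀ + y₀)⌋ : ℝ) + (z₀ + J * w) := by
      rw [mul_add]; linarith [hfl]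
    rw [this, Int.fract_intCast_add, Int.fract_eq_self.mpr ⟨hw.1, hw.2⟩]
  have hmem : ∀ a b : ℝ, |a| < ε → |b| < ε → (x₀ + a, y₀ + b) ∈ interior I := by
    intro a b ha hb
    apply hball
    rw [Metric.mem_ball, Prod.dist_eq]
    simp only [Real.dist_eq, add_sub_cancel_left]
    exact max_lt (lt_of_lt_of_le ha hεδ) (lt_of_lt_of_le hb hεδ)
  have h0 : |(0:ℝ)| < ε := by
    simpa using lt_of_le_of_lt (abs_nonneg u) hu
  have happ : ∀ a b : ℝ, |a| < ε → |b| < ε → |a + b| < ε →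
      μ₁ (x₀ + a) + μ₂ (y₀ + b) + μ₃ (z₀ + J * (a + b)) = 0 := by
    intro a b ha hb hab
    have h := heq _ (hmem a b ha hb)
    simp only at h
    have hsum : (x₀ + a) + (y₀ + b) = x₀ + y₀ + (a + b) := by ring
    rw [hsum, key _ (hico _ hab)] at h
    exact h
  have h1 := happ u v hu hv huv
  have h2 := happ u 0 hu h0 (by simpa using hu)
  have h3 := happ 0 v h0 hv (by simpa using hv)
  have h4 := happ 0 0 h0 h0 (by simpa using h0)
  simp only [add_zero, zero_add, mul_zero] at h2 h3 h4
  linarith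
end
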